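/- Let p be a prime, n ≥ 1, Γ a complete set of representatives of ℤ^n/pℤ^n containing 0 with Γ' = Γ \ {0}, F_p a complete set of representatives of ℤ/pℤ containing 0 with F_p' = F_p \ {0}, and η(l,ν) ∈ Γ' the unique element with η(l,ν) ≡ ρ(l)ν (mod pℤ^n), where ρ(l) is the multiplicative inverse of l mod p. Let G : ℤ → ℝ be a finitely supported 1-D lowpass filter with dilation p, and let g : ℤ^n → ℝ be its prime coset sum lowpass filter (the filter of the mask C_{n,p}[Ĝ]). Let y : ℤ^n → ℝ and w_ν : ℤ^n → ℝ, ν ∈ Γ', be finitely supported, and define y'(k) := y(pk) + (1/((p−1)p^n)) Σ_{ν∈Γ'} Σ_{l∈F_p'} Σ_{m∈ℤ, m≡l (mod p)} G(m)·w_ν(k − (ν − η(l,ν)m)/p). Then the argument k − (ν − η(l,ν)m)/p always lies in ℤ^n, and for every ω ∈ ℝ^n: (1/p^n) Σ_{k∈ℤ^n} y'(k) e^{-ik·ω} = (y(p·))^(ω) + Σ_{ν∈Γ'} \overline{(g(ν+p·))^(ω)}·(1/p^n) Σ_{k∈ℤ^n} w_ν(k)e^{-ik·ω}, where (a(ν+p·))^(ω)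 := (1/p^n) Σ_{k∈ℤ^n} a(ν+pk) e^{-ik·ω}. In other words, the decomposition Step (ii) of the fast prime coset sum algorithm computes exactly Y' = Y_0 + Σ_ν G_ν W_ν in the polyphase domain. -/

import Mathlib

open scoped Real Classical

noncomputable section

/-- `eC x = e^{-ix}` as a complex number. -/
def eC (x : ℝ) : ℂ := Complex.exp (-(Complex.I * (x : ℂ)))

/-!
The mask identity determines `g` by Fourier uniqueness for trigonometric polynomials (Dedekind's
independence of characters): `g` is a multiple of `δ₀` plus `(1/(p-1)) Σ_{μ∈Γ'} Σ_K G(K) δ_{Kμ}`.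
For `ν ∈ Γ'` the polyphase component of `g` at `ν` only sees the pairs `(μ, K)` with
`Kμ ≡ ν (mod p)`. Such a `K` is a unit mod `p`, and then `μ ≡ ρ(l)ν` for the representative `l`
of `K`, i.e. `μ = η(l, ν)`. So these pairs are exactly the `(η(l, ν), m)` with `m ≡ l ≢ 0`, and
`conj G_ν` is the trigonometric polynomial with weights `G(m)/((p-1)pⁿ)` at the frequencies
`(ν - m η(l, ν))/p`. These are precisely the shifts applied to `w_ν` in the definition of `y'`,
and a shift of the argument multiplies the Fourier series by the corresponding exponential.
-/

open Function Finset

lemma eC_add (x y : ℝ) : eC (x + y) = eC x * eC y := by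
  simp only [eC, Complex.ofReal_add, ← Complex.exp_add]; ring_nf

lemma eC_zero : eC 0 = 1 := by simp [eC]

lemma conj_eC (x : ℝ) : starRingEnd ℂ (eC x) = eC (-x) := by
  simp [eC, ← Complex.exp_conj]

lemma eC_pi : eC π = -1 := by
  simp [eC, mul_comm Complex.I, Complex.exp_neg, Complex.exp_pi_mul_I]

lemma sum_intCast_add_mul {n : ℕ} (k d : Fin n → ℤ) (ω : Fin n → ℝ) :
    ∑ i, ((k + d) i : ℝ) * ω i = ∑ i, (k i : ℝ) * ω i + ∑ i, (d i : ℝ) * ω i := by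
  simp only [Pi.add_apply, Int.cast_add, add_mul, sum_add_distrib]

-- `ω ↦ e^{-i k·ω}`, written multiplicatively so that `linearIndependent_monoidHom` applies.
def expChar {n : ℕ} (k : Fin n → ℤ) : Multiplicative (Fin n → ℝ) →* ℂ where
  toFun ω := eC (∑ i, (k i : ℝ) * ω.toAdd i)
  map_one' := by simp [eC_zero]
  map_mul' ω ω' := by simp [mul_add, sum_add_distrib, eC_add]

lemma expChar_injective {n : ℕ} : Injective (expChar (n := n)) := by
  intro k k' h
  by_contra hne
  obtain ⟨i, hi⟩ := Function.ne_iff.mp hne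
  have hx : ((k i - k' i : ℤ) : ℝ) ≠ 0 := by exact_mod_cast sub_ne_zero.mpr hi
  have h' := DFunLike.congr_fun h (Multiplicative.ofAdd (Pi.single i (π / (k i - k' i : ℤ))))
  simp only [expChar, MonoidHom.coe_mk, OneHom.coe_mk, toAdd_ofAdd, Pi.single_apply,
    mul_ite, mul_zero, sum_ite_eq', mem_univ, if_true] at h'
  have hsplit : ((k i : ℤ) : ℝ) * (π / (k i - k' i : ℤ)) =
      π + ((k' i : ℤ) : ℝ) * (π / (k i - k' i : ℤ)) := by
    field_simp; push_cast; ring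
  rw [hsplit, eC_add, eC_pi] at h'
  have h0 : eC (((k' i : ℤ) : ℝ) * (π / (k i - k' i : ℤ))) ≠ 0 := Complex.exp_ne_zero _
  exact absurd (mul_right_cancel₀ h0 (h'.trans (one_mul _).symm)) (by norm_num)

def dtft {n : ℕ} (f : (Fin n → ℤ) → ℂ) (ω : Fin n → ℝ) : ℂ :=
  ∑ᶠ k, f k * eC (∑ i, (k i : ℝ) * ω i)

lemma hasFiniteSupport_finset_sum {α ι M : Type*} [AddCommMonoid M] (s : Finset ι)
    {f : ι → α → M} (hf : ∀ j ∈ s, HasFiniteSupport (f j)) :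
    HasFiniteSupport (∑ j ∈ s, f j) := by
  rw [sum_fn]
  exact (s.finite_toSet.biUnion hf).subset (support_sum s f)

lemma hasFiniteSupport_const_smul {α R M : Type*} [Zero M] [SMulZeroClass R M] (c : R)
    {f : α → M} (hf : HasFiniteSupport f) : HasFiniteSupport (c • f) :=
  hf.subset (support_const_smul_subset c f)

section Dtft

variable {n : ℕ}

lemma dtft_add {f g : (Fin n → ℤ) → ℂ} (hf : HasFiniteSupport f) (hg : HasFiniteSupport g)
    (ω : Fin n → ℝ) : dtft (f + g) ω = dtft f ω + dtft g ω := by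
  simp only [dtft, Pi.add_apply, add_mul]
  exact finsum_add_distrib (hf.fun_mul_left _) (hg.fun_mul_left _)

lemma dtft_smul (c : ℂ) (f : (Fin n → ℤ) → ℂ) (ω : Fin n → ℝ) :
    dtft (c • f) ω = c * dtft f ω := by
  simp only [dtft, Pi.smul_apply, smul_eq_mul, mul_finsum, mul_assoc]

lemma dtft_sum {ι : Type*} (s : Finset ι) {f : ι → (Fin n → ℤ) → ℂ}
    (hf : ∀ j ∈ s, HasFiniteSupport (f j)) (ω : Fin n → ℝ) :
    dtft (∑ j ∈ s, f j) ω = ∑ j ∈ s, dtft (f j) ω := by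
  simp only [dtft, Finset.sum_apply, sum_mul]
  exact finsum_sum_comm s _ fun j hj => (hf j hj).fun_mul_left _

lemma dtft_comp_sub (f : (Fin n → ℤ) → ℂ) (d : Fin n → ℤ) (ω : Fin n → ℝ) :
    dtft (fun k => f (k - d)) ω = eC (∑ i, (d i : ℝ) * ω i) * dtft f ω := by
  rw [dtft, ← finsum_comp_equiv (Equiv.addRight d), dtft, mul_finsum]
  refine finsum_congr fun k => ?_
  rw [Equiv.coe_addRight, add_sub_cancel_right, sum_intCast_add_mul, eC_add]
  ring

lemma dtft_single (a : Fin n → ℤ) (c : ℂ) (ω : Fin n → ℝ) :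
    dtft (Pi.single a c) ω = c * eC (∑ i, (a i : ℝ) * ω i) := by
  rw [dtft, finsum_eq_single _ a fun k hk => by simp [hk]]
  simp

lemma dtft_eq_sum {f : (Fin n → ℤ) → ℂ} (hf : HasFiniteSupport f) (ω : Fin n → ℝ) :
    dtft f ω = ∑ k ∈ hf.toFinset, f k * eC (∑ i, (k i : ℝ) * ω i) :=
  finsum_eq_sum_of_support_subset _ fun _ hk =>
    (Set.Finite.mem_toFinset hf).mpr (left_ne_zero_of_mul hk)

lemma dtft_injective {f g : (Fin n → ℤ) → ℂ} (hf : HasFiniteSupport f) (hg : HasFiniteSupport g)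
    (h : ∀ ω, dtft f ω = dtft g ω) : f = g := by
  set d : (Fin n → ℤ) → ℂ := fun k => f k - g k
  have hd : HasFiniteSupport d := hf.fun_sub hg
  have hsum : ∑ k ∈ hd.toFinset, d k • (expChar k : Multiplicative (Fin n → ℝ) → ℂ) = 0 := by
    ext ω
    have hd0 : dtft d ω.toAdd = 0 := by
      simp only [dtft, d, sub_mul]
      rw [finsum_sub_distrib (hf.fun_mul_left _) (hg.fun_mul_left _)]
      exact sub_eq_zero.mpr (h _)
    rw [dtft_eq_sum hd] at hd0
    simpa [expChar] using hd0
  funext k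
  by_cases hk : k ∈ hd.toFinset
  · exact sub_eq_zero.mp <| linearIndependent_iff'.mp
      ((linearIndependent_monoidHom _ ℂ).comp _ expChar_injective) _ d hsum k hk
  · exact sub_eq_zero.mp (by simpa using (Set.Finite.mem_toFinset hd).not.mp hk)

end Dtft

def polyphase {n : ℕ} (c : ℤ) (ν : Fin n → ℤ) (f : (Fin n → ℤ) → ℂ) : (Fin n → ℤ) → ℂ :=
  fun k => f (ν + c • k)

section Polyphase

variable {n : ℕ} {c : ℤ} {ν : Fin n → ℤ}

lemma polyphase_add (f g : (Fin n → ℤ) → ℂ) :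
    polyphase c ν (f + g) = polyphase c ν f + polyphase c ν g := rfl

lemma polyphase_sum {ι : Type*} (s : Finset ι) (f : ι → (Fin n → ℤ) → ℂ) :
    polyphase c ν (∑ j ∈ s, f j) = ∑ j ∈ s, polyphase c ν (f j) := by
  ext k
  simp [polyphase]

lemma polyphase_single (hc : c ≠ 0) (a : Fin n → ℤ) (x : ℂ) :
    polyphase c ν (Pi.single a x) =
      if ∀ i, c ∣ a i - ν i then Pi.single (fun i => (a i - ν i) / c) x else 0 := by
  ext k
  split_ifs with hdvd
  · have : ν + c • k = a ↔ k = fun i => (a i - ν i) / c := by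
      simp only [funext_iff, Pi.add_apply, Pi.smul_apply, smul_eq_mul]
      refine forall_congr' fun i => ?_
      rw [EuclideanDomain.eq_div_iff_mul_eq_of_dvd _ _ _ hc (hdvd i)]
      constructor <;> intro h <;> linarith
    simp only [polyphase, Pi.single_apply]
    exact if_congr this rfl rfl
  · have : ν + c • k ≠ a := by
      rintro rfl
      exact hdvd fun i => ⟨k i, by simp⟩
    simp only [polyphase, Pi.single_apply, Pi.zero_apply, this, if_false]

end Polyphase

lemma dvd_sub_mul_of_dvd_mul_sub_one {p l r e ν m : ℤ} (hr : p ∣ l * r - 1)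
    (he : p ∣ e - r * ν) (hm : p ∣ m - l) : p ∣ ν - m * e := by
  obtain ⟨a, ha⟩ := hr
  obtain ⟨b, hb⟩ := he
  obtain ⟨c, hc⟩ := hm
  exact ⟨-c * e - l * b - a * ν, by linear_combination (-e) * hc - l * hb - ν * ha⟩

lemma dvd_sub_of_dvd_mul_sub_one {p l r e ν μ K : ℤ} (hr : p ∣ l * r - 1)
    (he : p ∣ e - r * ν) (hK : p ∣ K - l) (hν : p ∣ K * μ - ν) : p ∣ e - μ := by
  obtain ⟨a, ha⟩ := hr
  obtain ⟨b, hb⟩ := he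
  obtain ⟨c, hc⟩ := hK
  obtain ⟨d, hd⟩ := hν
  exact ⟨b - r * d + r * μ * c + a * μ, by linear_combination hb - r * hd + r * μ * hc + μ * ha⟩

section ResidueSystem

variable {n p : ℕ} {Γ : Finset (Fin n → ℤ)} {Fp : Finset ℤ}

lemma eq_of_forall_dvd_sub (hΓ : ∀ k : Fin n → ℤ, ∃! ν : Fin n → ℤ,
      ν ∈ Γ ∧ ∃ m : Fin n → ℤ, k = ν + (p : ℤ) • m)
    {μ μ' : Fin n → ℤ} (hμ : μ ∈ Γ) (hμ' : μ' ∈ Γ) (h : ∀ i, (p : ℤ) ∣ μ i - μ' i) : μ = μ' :=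
  (hΓ μ).unique ⟨hμ, 0, by simp⟩
    ⟨hμ', fun i => (μ i - μ' i) / p, funext fun i => by simp [Int.mul_ediv_cancel' (h i)]⟩

lemma eq_of_dvd_sub (hFp : ∀ k : ℤ, ∃! l : ℤ, l ∈ Fp ∧ ∃ m : ℤ, k = l + p * m)
    {l l' : ℤ} (hl : l ∈ Fp) (hl' : l' ∈ Fp) (h : (p : ℤ) ∣ l - l') : l = l' :=
  (hFp l).unique ⟨hl, 0, by simp⟩ ⟨hl', (l - l') / p, by rw [Int.mul_ediv_cancel' h]; ring⟩

lemma not_forall_dvd_of_mem_erase_zero (hΓ0 : (0 : Fin n → ℤ) ∈ Γ)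
    (hΓ : ∀ k : Fin n → ℤ, ∃! ν : Fin n → ℤ, ν ∈ Γ ∧ ∃ m : Fin n → ℤ, k = ν + (p : ℤ) • m)
    {ν : Fin n → ℤ} (hν : ν ∈ Γ.erase 0) : ¬ ∀ i, (p : ℤ) ∣ ν i := fun h =>
  (mem_erase.mp hν).1 (eq_of_forall_dvd_sub hΓ (mem_erase.mp hν).2 hΓ0 (by simpa using h))

end ResidueSystem

-- The prime coset sum filter of `G` written out: its symbol is `C_{n,p}[Ĝ]` if `support G ⊆ SG`.
def cosetSumFilter (n p : ℕ) (Γ : Finset (Fin n → ℤ)) (G : ℤ → ℝ) (SG : Finset ℤ) :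
    (Fin n → ℤ) → ℂ :=
  Pi.single 0 ((p : ℂ) * (1 - (p : ℂ) ^ (n - 1)) / ((p : ℂ) - 1)) +
    ∑ q ∈ Γ.erase 0 ×ˢ SG, Pi.single (q.2 • q.1) ((G q.2 : ℂ) / ((p : ℂ) - 1))

section CosetSumFilter

variable {n p : ℕ} {Γ : Finset (Fin n → ℤ)} {G : ℤ → ℝ} {SG : Finset ℤ}

lemma hasFiniteSupport_single (a : Fin n → ℤ) (c : ℂ) :
    HasFiniteSupport (Pi.single a c) :=
  (Set.finite_singleton a).subset Pi.support_single_subset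

lemma hasFiniteSupport_sum_single {ι : Type*} (s : Finset ι) (a : ι → Fin n → ℤ) (c : ι → ℂ) :
    HasFiniteSupport (∑ j ∈ s, Pi.single (a j) (c j)) :=
  hasFiniteSupport_finset_sum s fun _ _ => hasFiniteSupport_single _ _

lemma hasFiniteSupport_cosetSumFilter : HasFiniteSupport (cosetSumFilter n p Γ G SG) :=
  (hasFiniteSupport_single _ _).add (hasFiniteSupport_sum_single _ _ _)

lemma dtft_cosetSumFilter (hn : 1 ≤ n) (hp : 1 < p) (hSG : support G ⊆ SG)
    (ω : Fin n → ℝ) :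
    (1 / (p : ℂ) ^ n) * dtft (cosetSumFilter n p Γ G SG) ω =
      (1 / (((p : ℂ) - 1) * (p : ℂ) ^ (n - 1))) *
        (1 - (p : ℂ) ^ (n - 1) +
          ∑ ν ∈ Γ.erase 0,
            (1 / (p : ℂ)) * ∑ᶠ K : ℤ, (G K : ℂ) * eC ((K : ℝ) * ∑ i, ω i * (ν i : ℝ))) := by
  have hG : ∀ ν : Fin n → ℤ, ∑ᶠ K : ℤ, (G K : ℂ) * eC ((K : ℝ) * ∑ i, ω i * (ν i : ℝ)) =
      ∑ K ∈ SG, (G K : ℂ) * eC ((K : ℝ) * ∑ i, ω i * (ν i : ℝ)) := fun ν =>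
    finsum_eq_sum_of_support_subset _ fun K hK => hSG (by simpa using left_ne_zero_of_mul hK)
  rw [cosetSumFilter, dtft_add (hasFiniteSupport_single _ _) (hasFiniteSupport_sum_single _ _ _),
    dtft_sum _ fun _ _ => hasFiniteSupport_single _ _, dtft_single]
  have hexp : ∀ (μ : Fin n → ℤ) (K : ℤ),
      ∑ i, (((K • μ) i : ℤ) : ℝ) * ω i = K * ∑ i, ω i * (μ i : ℝ) := fun μ K => by
    simp only [Pi.smul_apply, smul_eq_mul, Int.cast_mul, mul_sum]
    exact sum_congr rfl fun i _ => by ring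
  simp only [dtft_single, hG, sum_product, ← mul_sum, hexp, Pi.zero_apply, Int.cast_zero,
    zero_mul, sum_const_zero, eC_zero, mul_one, div_mul_eq_mul_div, ← sum_div]
  have hp0 : (p : ℂ) ≠ 0 := by exact_mod_cast (by omega : p ≠ 0)
  have hp1 : (p : ℂ) - 1 ≠ 0 := sub_ne_zero.mpr (by exact_mod_cast hp.ne')
  obtain ⟨m, rfl⟩ := Nat.exists_eq_add_of_le' hn
  rw [Nat.add_sub_cancel, pow_succ]
  field_simp

lemma eq_cosetSumFilter (hn : 1 ≤ n) (hp : 1 < p) (hG : HasFiniteSupport G)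
    {g : (Fin n → ℤ) → ℝ} (hg : HasFiniteSupport g)
    (hmask : ∀ ω : Fin n → ℝ,
      (1 / (p : ℂ) ^ n) * ∑ᶠ k : Fin n → ℤ, (g k : ℂ) * eC (∑ i, (k i : ℝ) * ω i) =
      (1 / (((p : ℂ) - 1) * (p : ℂ) ^ (n - 1))) *
        (1 - (p : ℂ) ^ (n - 1) +
          ∑ ν ∈ Γ.erase 0,
            (1 / (p : ℂ)) * ∑ᶠ K : ℤ, (G K : ℂ) * eC ((K : ℝ) * ∑ i, ω i * (ν i : ℝ)))) :
    (fun k => (g k : ℂ)) = cosetSumFilter n p Γ G hG.toFinset := by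
  have hp0 : (1 / (p : ℂ) ^ n) ≠ 0 :=
    one_div_ne_zero (pow_ne_zero _ (Nat.cast_ne_zero.mpr (by omega)))
  refine dtft_injective (hg.fun_comp Complex.ofReal_zero) hasFiniteSupport_cosetSumFilter
    fun ω => mul_left_cancel₀ hp0 ?_
  rw [dtft_cosetSumFilter hn hp hG.coe_toFinset.superset ω]
  exact hmask ω

lemma dtft_polyphase_cosetSumFilter (hp : 1 < p) {ν : Fin n → ℤ} (hν : ¬ ∀ i, (p : ℤ) ∣ ν i)
    (ω : Fin n → ℝ) :
    dtft (polyphase p ν (cosetSumFilter n p Γ G SG)) ω =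
      1 / ((p : ℂ) - 1) *
        ∑ q ∈ (Γ.erase 0 ×ˢ SG).filter (fun q => ∀ i, (p : ℤ) ∣ q.2 * q.1 i - ν i),
          (G q.2 : ℂ) * eC (∑ i, (((q.2 * q.1 i - ν i) / p : ℤ) : ℝ) * ω i) := by
  have hp0 : (p : ℤ) ≠ 0 := by omega
  have h0 : ¬ ∀ i, (p : ℤ) ∣ (0 : Fin n → ℤ) i - ν i := by simpa using hν
  rw [cosetSumFilter, polyphase_add, polyphase_sum, polyphase_single hp0, if_neg h0, zero_add]
  simp only [polyphase_single hp0, Pi.smul_apply, smul_eq_mul]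
  rw [← sum_filter, dtft_sum _ fun _ _ => hasFiniteSupport_single _ _, mul_sum]
  refine sum_congr rfl fun q _ => ?_
  rw [dtft_single]
  ring

end CosetSumFilter

section Reindex

variable {n p : ℕ} {Γ : Finset (Fin n → ℤ)} {Fp : Finset ℤ} {ρ : ℤ → ℤ}
  {η : ℤ → (Fin n → ℤ) → (Fin n → ℤ)}

lemma dvd_sub_mul_eta (hρ : ∀ l ∈ Fp.erase 0, ρ l ∈ Fp.erase 0 ∧ (p : ℤ) ∣ (l * ρ l - 1))
    (hη : ∀ l ∈ Fp.erase 0, ∀ ν ∈ Γ.erase 0,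
      η l ν ∈ Γ.erase 0 ∧ ∀ i, (p : ℤ) ∣ (η l ν i - ρ l * ν i))
    {ν : Fin n → ℤ} (hν : ν ∈ Γ.erase 0) {l : ℤ} (hl : l ∈ Fp.erase 0) {m : ℤ}
    (hm : (p : ℤ) ∣ m - l) (i : Fin n) : (p : ℤ) ∣ ν i - m * η l ν i :=
  dvd_sub_mul_of_dvd_mul_sub_one (hρ l hl).2 ((hη l hl ν hν).2 i) hm

lemma sum_filter_dvd_eq_sum_eta (hΓ0 : (0 : Fin n → ℤ) ∈ Γ)
    (hΓ : ∀ k : Fin n → ℤ, ∃! ν : Fin n → ℤ, ν ∈ Γ ∧ ∃ m : Fin n → ℤ, k = ν + (p : ℤ) • m)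
    (hFp : ∀ k : ℤ, ∃! l : ℤ, l ∈ Fp ∧ ∃ m : ℤ, k = l + p * m)
    (hρ : ∀ l ∈ Fp.erase 0, ρ l ∈ Fp.erase 0 ∧ (p : ℤ) ∣ (l * ρ l - 1))
    (hη : ∀ l ∈ Fp.erase 0, ∀ ν ∈ Γ.erase 0,
      η l ν ∈ Γ.erase 0 ∧ ∀ i, (p : ℤ) ∣ (η l ν i - ρ l * ν i))
    {ν : Fin n → ℤ} (hν : ν ∈ Γ.erase 0) (SG : Finset ℤ) (F : (Fin n → ℤ) → ℤ → ℂ) :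
    ∑ q ∈ (Γ.erase 0 ×ˢ SG).filter (fun q => ∀ i, (p : ℤ) ∣ q.2 * q.1 i - ν i), F q.1 q.2 =
      ∑ b ∈ (Fp.erase 0 ×ˢ SG).filter (fun b => (p : ℤ) ∣ b.2 - b.1), F (η b.1 ν) b.2 := by
  symm
  refine sum_nbij (fun b => (η b.1 ν, b.2)) ?_ ?_ ?_ fun _ _ => rfl
  · rintro ⟨l, m⟩ hb
    simp only [mem_filter, mem_product] at hb ⊢
    refine ⟨⟨(hη l hb.1.1 ν hν).1, hb.1.2⟩, fun i => ?_⟩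
    rw [← dvd_neg, neg_sub]
    exact dvd_sub_mul_eta hρ hη hν hb.1.1 hb.2 i
  · rintro ⟨l, m⟩ hb ⟨l', m'⟩ hb' h
    simp only [Prod.mk.injEq] at h
    obtain ⟨-, rfl⟩ := h
    simp only [coe_filter, mem_product, Set.mem_ofPred_eq] at hb hb'
    have hll' : (p : ℤ) ∣ l - l' := by
      simpa using dvd_sub hb'.2 hb.2
    rw [eq_of_dvd_sub hFp (mem_of_mem_erase hb.1.1) (mem_of_mem_erase hb'.1.1) hll']
  · rintro ⟨μ, K⟩ hq
    simp only [coe_filter, mem_product, Set.mem_ofPred_eq] at hq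
    obtain ⟨⟨hμ, hK⟩, hKμ⟩ := hq
    obtain ⟨l, ⟨hl, m, rfl⟩, -⟩ := hFp K
    have hl0 : l ≠ 0 := by
      rintro rfl
      refine not_forall_dvd_of_mem_erase_zero hΓ0 hΓ hν fun i => ?_
      simpa [mul_assoc] using (dvd_mul_right (p : ℤ) (m * μ i)).sub (hKμ i)
    have hl' : l ∈ Fp.erase 0 := mem_erase.mpr ⟨hl0, hl⟩
    refine ⟨(l, l + p * m), ?_, ?_⟩
    · simp [hl0, hl, hK]
    · obtain ⟨hηΓ, hηρ⟩ := hη l hl' ν hν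
      refine Prod.ext (eq_of_forall_dvd_sub hΓ (mem_of_mem_erase hηΓ) (mem_of_mem_erase hμ)
        fun i => dvd_sub_of_dvd_mul_sub_one (hρ l hl').2 (hηρ i) (by simp) (hKμ i)) rfl

end Reindex

lemma conj_dtft_polyphase_cosetSumFilter {n p : ℕ} (hp : 1 < p) {Γ : Finset (Fin n → ℤ)}
    (hΓ0 : (0 : Fin n → ℤ) ∈ Γ)
    (hΓ : ∀ k : Fin n → ℤ, ∃! ν : Fin n → ℤ, ν ∈ Γ ∧ ∃ m : Fin n → ℤ, k = ν + (p : ℤ) • m)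
    {Fp : Finset ℤ} (hFp : ∀ k : ℤ, ∃! l : ℤ, l ∈ Fp ∧ ∃ m : ℤ, k = l + p * m)
    {ρ : ℤ → ℤ} (hρ : ∀ l ∈ Fp.erase 0, ρ l ∈ Fp.erase 0 ∧ (p : ℤ) ∣ (l * ρ l - 1))
    {η : ℤ → (Fin n → ℤ) → (Fin n → ℤ)} (hη : ∀ l ∈ Fp.erase 0, ∀ ν ∈ Γ.erase 0,
      η l ν ∈ Γ.erase 0 ∧ ∀ i, (p : ℤ) ∣ (η l ν i - ρ l * ν i))
    {ν : Fin n → ℤ} (hν : ν ∈ Γ.erase 0) (G : ℤ → ℝ) (SG : Finset ℤ) (ω : Fin n → ℝ) :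
    starRingEnd ℂ (dtft (polyphase p ν (cosetSumFilter n p Γ G SG)) ω) =
      1 / ((p : ℂ) - 1) * ∑ b ∈ (Fp.erase 0 ×ˢ SG).filter (fun b => (p : ℤ) ∣ b.2 - b.1),
        (G b.2 : ℂ) * eC (∑ i, (((ν i - b.2 * η b.1 ν i) / p : ℤ) : ℝ) * ω i) := by
  rw [dtft_polyphase_cosetSumFilter hp (not_forall_dvd_of_mem_erase_zero hΓ0 hΓ hν),
    sum_filter_dvd_eq_sum_eta hΓ0 hΓ hFp hρ hη hν SG
      (fun μ K => (G K : ℂ) * eC (∑ i, (((K * μ i - ν i) / p : ℤ) : ℝ) * ω i)),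
    map_mul, map_sum]
  congr 1
  · simp
  refine sum_congr rfl fun b hb => ?_
  simp only [mem_filter, mem_product] at hb
  rw [map_mul, Complex.conj_ofReal, conj_eC, ← sum_neg_distrib]
  congr 3 with i
  rw [← neg_mul, ← Int.cast_neg, ← Int.neg_ediv_of_dvd, neg_sub]
  rw [← dvd_neg, neg_sub]
  exact dvd_sub_mul_eta hρ hη hν hb.1.1 hb.2 i

lemma dtft_add_sum_sum_shift {n : ℕ} {ι κ : Type*} {y₀ : (Fin n → ℤ) → ℂ}
    (hy₀ : HasFiniteSupport y₀) (C : ℂ) (V : Finset ι) (B : Finset κ) (a : ι → κ → ℂ)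
    {w : ι → (Fin n → ℤ) → ℂ} (hw : ∀ ν ∈ V, HasFiniteSupport (w ν))
    (d : ι → κ → Fin n → ℤ) (ω : Fin n → ℝ) :
    dtft (fun k => y₀ k + C * ∑ ν ∈ V, ∑ b ∈ B, a ν b * w ν (k - d ν b)) ω =
      dtft y₀ ω + C * ∑ ν ∈ V,
        (∑ b ∈ B, a ν b * eC (∑ i, (d ν b i : ℝ) * ω i)) * dtft (w ν) ω := by
  have hshift : ∀ ν ∈ V, ∀ b, HasFiniteSupport fun k => w ν (k - d ν b) := fun ν hν b =>
    (hw ν hν).fun_comp_of_injective (sub_left_injective (b := d ν b))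
  have hsum : ∀ ν ∈ V,
      HasFiniteSupport (∑ b ∈ B, a ν b • fun k => w ν (k - d ν b)) := fun ν hν =>
    hasFiniteSupport_finset_sum _ fun b _ => hasFiniteSupport_const_smul _ (hshift ν hν b)
  rw [show (fun k => y₀ k + C * ∑ ν ∈ V, ∑ b ∈ B, a ν b * w ν (k - d ν b)) =
      y₀ + C • ∑ ν ∈ V, ∑ b ∈ B, a ν b • fun k => w ν (k - d ν b) by
    ext k; simp [Finset.sum_apply],
    dtft_add hy₀ (hasFiniteSupport_const_smul _ (hasFiniteSupport_finset_sum _ hsum)),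
    dtft_smul, dtft_sum _ hsum]
  congr 2
  refine sum_congr rfl fun ν hν => ?_
  rw [dtft_sum _ fun b _ => hasFiniteSupport_const_smul _ (hshift ν hν b), sum_mul]
  refine sum_congr rfl fun b _ => ?_
  rw [dtft_smul, dtft_comp_sub]
  ring

lemma sum_finsum_mem_eq_sum_filter_product {ι α R : Type*} [NonUnitalNonAssocSemiring R]
    (L : Finset ι) {S : Finset α} {G : α → R} (hS : support G ⊆ S) (P : ι → α → Prop)
    [∀ l m, Decidable (P l m)] (X : ι → α → R) :
    ∑ l ∈ L, ∑ᶠ m ∈ {m | P l m}, G m * X l m =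
      ∑ b ∈ (L ×ˢ S).filter (fun b => P b.1 b.2), G b.2 * X b.1 b.2 := by
  rw [sum_filter, sum_product]
  refine sum_congr rfl fun l _ => ?_
  rw [← sum_filter]
  refine finsum_mem_eq_sum_of_subset _ (fun m hm => ?_) (fun m hm => ?_)
  · exact mem_filter.mpr ⟨hS (left_ne_zero_of_mul hm.2), hm.1⟩
  · exact (mem_filter.mp hm).2

theorem fast_algorithm_step_ii_general
    (n : ℕ) (hn : 1 ≤ n) (p : ℕ) (hp : p.Prime)
    (Γ : Finset (Fin n → ℤ)) (hΓ0 : (0 : Fin n → ℤ) ∈ Γ)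
    (hΓ : ∀ k : Fin n → ℤ, ∃! ν : Fin n → ℤ,
      ν ∈ Γ ∧ ∃ m : Fin n → ℤ, k = ν + (p : ℤ) • m)
    (Fp : Finset ℤ)
    (hFp : ∀ k : ℤ, ∃! l : ℤ, l ∈ Fp ∧ ∃ m : ℤ, k = l + p * m)
    (ρ : ℤ → ℤ)
    (hρ : ∀ l ∈ Fp.erase 0, ρ l ∈ Fp.erase 0 ∧ (p : ℤ) ∣ (l * ρ l - 1))
    (η : ℤ → (Fin n → ℤ) → (Fin n → ℤ))
    (hη : ∀ l ∈ Fp.erase 0, ∀ ν ∈ Γ.erase 0,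
      η l ν ∈ Γ.erase 0 ∧ ∀ i, (p : ℤ) ∣ (η l ν i - ρ l * ν i))
    (G : ℤ → ℝ) (hGfin : (Function.support G).Finite)
    -- `g` is the prime coset sum lowpass filter of `G`
    (g : (Fin n → ℤ) → ℝ) (hgfin : (Function.support g).Finite)
    (hmask : ∀ ω : Fin n → ℝ,
      (1 / (p : ℂ) ^ n) * ∑ᶠ k : Fin n → ℤ, (g k : ℂ) * eC (∑ i, (k i : ℝ) * ω i) =
      (1 / (((p : ℂ) - 1) * (p : ℂ) ^ (n - 1))) *
        (1 - (p : ℂ) ^ (n - 1) +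
          ∑ ν ∈ Γ.erase 0,
            (1 / (p : ℂ)) * ∑ᶠ K : ℤ, (G K : ℂ) * eC ((K : ℝ) * ∑ i, ω i * (ν i : ℝ))))
    (y : (Fin n → ℤ) → ℝ) (hyfin : (Function.support y).Finite)
    (w : (Fin n → ℤ) → (Fin n → ℤ) → ℝ)
    (hwfin : ∀ ν : Fin n → ℤ, (Function.support (w ν)).Finite)
    (y' : (Fin n → ℤ) → ℝ)
    (hy' : ∀ k : Fin n → ℤ, y' k =
      y ((p : ℤ) • k) + (1 / (((p : ℝ) - 1) * (p : ℝ) ^ n)) *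
        ∑ ν ∈ Γ.erase 0, ∑ l ∈ Fp.erase 0,
          ∑ᶠ m ∈ {m : ℤ | (p : ℤ) ∣ (m - l)},
            G m * w ν (k - fun i => (ν i - m * η l ν i) / (p : ℤ))) :
    (∀ ν ∈ Γ.erase 0, ∀ l ∈ Fp.erase 0, ∀ m : ℤ, (p : ℤ) ∣ (m - l) →
      ∀ i, (p : ℤ) ∣ (ν i - m * η l ν i)) ∧
    ∀ ω : Fin n → ℝ,
      (1 / (p : ℂ) ^ n) * ∑ᶠ k : Fin n → ℤ, (y' k : ℂ) * eC (∑ i, (k i : ℝ) * ω i) =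
      (1 / (p : ℂ) ^ n) *
          ∑ᶠ k : Fin n → ℤ, (y ((p : ℤ) • k) : ℂ) * eC (∑ i, (k i : ℝ) * ω i) +
        ∑ ν ∈ Γ.erase 0,
          (starRingEnd ℂ) ((1 / (p : ℂ) ^ n) *
              ∑ᶠ k : Fin n → ℤ, (g (ν + (p : ℤ) • k) : ℂ) * eC (∑ i, (k i : ℝ) * ω i)) *
            ((1 / (p : ℂ) ^ n) *
              ∑ᶠ k : Fin n → ℤ, (w ν k : ℂ) * eC (∑ i, (k i : ℝ) * ω i)) := by
  have hp1 : 1 < p := hp.one_lt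
  have hp0 : (p : ℤ) ≠ 0 := by omega
  refine ⟨fun ν hν l hl m hm i => dvd_sub_mul_eta hρ hη hν hl hm i, fun ω => ?_⟩
  set B := (Fp.erase 0 ×ˢ hGfin.toFinset).filter (fun b => (p : ℤ) ∣ b.2 - b.1)
  have hy'B : (fun k => (y' k : ℂ)) = fun k => (y ((p : ℤ) • k) : ℂ) +
      1 / (((p : ℂ) - 1) * (p : ℂ) ^ n) * ∑ ν ∈ Γ.erase 0, ∑ b ∈ B,
        (G b.2 : ℂ) * (w ν (k - fun i => (ν i - b.2 * η b.1 ν i) / (p : ℤ)) : ℂ) := by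
    ext k
    rw [hy' k, sum_congr rfl fun ν _ => sum_finsum_mem_eq_sum_filter_product _
      hGfin.coe_toFinset.superset (fun l m => (p : ℤ) ∣ m - l) _]
    push_cast
    rfl
  change (1 / (p : ℂ) ^ n) * dtft (fun k => (y' k : ℂ)) ω =
    (1 / (p : ℂ) ^ n) * dtft (fun k => (y ((p : ℤ) • k) : ℂ)) ω + ∑ ν ∈ Γ.erase 0,
      starRingEnd ℂ ((1 / (p : ℂ) ^ n) * dtft (polyphase p ν fun k => (g k : ℂ)) ω) *
        ((1 / (p : ℂ) ^ n) * dtft (fun k => (w ν k : ℂ)) ω)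
  rw [hy'B, dtft_add_sum_sum_shift ((HasFiniteSupport.fun_comp_of_injective
      (smul_right_injective _ hp0) hyfin).fun_comp Complex.ofReal_zero) _ _ _ _
      (fun ν _ => HasFiniteSupport.fun_comp (hwfin ν) Complex.ofReal_zero),
    eq_cosetSumFilter hn hp1 hGfin hgfin hmask, mul_add, mul_sum, mul_sum]
  congr 1
  refine sum_congr rfl fun ν hν => ?_
  rw [map_mul, conj_dtft_polyphase_cosetSumFilter hp1 hΓ0 hΓ hFp hρ hη hν]
  simp only [one_div, mul_inv, map_inv₀, map_pow, map_natCast]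
  ring

/-- **Correctness of Step (ii) of the fast prime coset sum decomposition algorithm.**
With `g` the prime coset sum lowpass filter of the 1-D lowpass filter `G`, the coarse
coefficients
`y'(k) = y(pk) + (1/((p-1)p^n)) Σ_{ν∈Γ'} Σ_{l∈F_p'} Σ_{m≡l (p)} G(m) w_ν(k - (ν-η(l,ν)m)/p)`
are well defined (the argument always lies in `ℤ^n`) and satisfy, in the frequency
domain, `Y'(ω) = (y(p·))^(ω) + Σ_{ν∈Γ'} conj((g(ν+p·))^(ω)) W_ν(ω)`. -/
theorem fast_algorithm_step_ii
    (n : ℕ) (hn : 1 ≤ n) (p : ℕ) (hp : p.Prime)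
    (Γ : Finset (Fin n → ℤ)) (hΓ0 : (0 : Fin n → ℤ) ∈ Γ)
    (hΓ : ∀ k : Fin n → ℤ, ∃! ν : Fin n → ℤ,
      ν ∈ Γ ∧ ∃ m : Fin n → ℤ, k = ν + (p : ℤ) • m)
    (Fp : Finset ℤ) (hFp0 : (0 : ℤ) ∈ Fp)
    (hFp : ∀ k : ℤ, ∃! l : ℤ, l ∈ Fp ∧ ∃ m : ℤ, k = l + p * m)
    (ρ : ℤ → ℤ)
    (hρ : ∀ l ∈ Fp.erase 0, ρ l ∈ Fp.erase 0 ∧ (p : ℤ) ∣ (l * ρ l - 1))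
    (η : ℤ → (Fin n → ℤ) → (Fin n → ℤ))
    (hη : ∀ l ∈ Fp.erase 0, ∀ ν ∈ Γ.erase 0,
      η l ν ∈ Γ.erase 0 ∧ ∀ i, (p : ℤ) ∣ (η l ν i - ρ l * ν i))
    (G : ℤ → ℝ) (hGfin : (Function.support G).Finite)
    (hGlow : (1 / (p : ℝ)) * ∑ᶠ K : ℤ, G K = 1)
    -- `g` is the prime coset sum lowpass filter of `G`
    (g : (Fin n → ℤ) → ℝ) (hgfin : (Function.support g).Finite)
    (hmask : ∀ ω : Fin n → ℝ,
      (1 / (p : ℂ) ^ n) * ∑ᶠ k : Fin n → ℤ, (g k : ℂ) * eC (∑ i, (k i : ℝ) * ω i) =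
      (1 / (((p : ℂ) - 1) * (p : ℂ) ^ (n - 1))) *
        (1 - (p : ℂ) ^ (n - 1) +
          ∑ ν ∈ Γ.erase 0,
            (1 / (p : ℂ)) * ∑ᶠ K : ℤ, (G K : ℂ) * eC ((K : ℝ) * ∑ i, ω i * (ν i : ℝ))))
    (y : (Fin n → ℤ) → ℝ) (hyfin : (Function.support y).Finite)
    (w : (Fin n → ℤ) → (Fin n → ℤ) → ℝ)
    (hwfin : ∀ ν : Fin n → ℤ, (Function.support (w ν)).Finite)
    (y' : (Fin n → ℤ) → ℝ)
    (hy' : ∀ k : Fin n → ℤ, y' k =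
      y ((p : ℤ) • k) + (1 / (((p : ℝ) - 1) * (p : ℝ) ^ n)) *
        ∑ ν ∈ Γ.erase 0, ∑ l ∈ Fp.erase 0,
          ∑ᶠ m ∈ {m : ℤ | (p : ℤ) ∣ (m - l)},
            G m * w ν (k - fun i => (ν i - m * η l ν i) / (p : ℤ))) :
    (∀ ν ∈ Γ.erase 0, ∀ l ∈ Fp.erase 0, ∀ m : ℤ, (p : ℤ) ∣ (m - l) →
      ∀ i, (p : ℤ) ∣ (ν i - m * η l ν i)) ∧
    ∀ ω : Fin n → ℝ,
      (1 / (p : ℂ) ^ n) * ∑ᶠ k : Fin n → ℤ, (y' k : ℂ) * eC (∑ i, (k i : ℝ) * ω i) =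
      (1 / (p : ℂ) ^ n) *
          ∑ᶠ k : Fin n → ℤ, (y ((p : ℤ) • k) : ℂ) * eC (∑ i, (k i : ℝ) * ω i) +
        ∑ ν ∈ Γ.erase 0,
          (starRingEnd ℂ) ((1 / (p : ℂ) ^ n) *
              ∑ᶠ k : Fin n → ℤ, (g (ν + (p : ℤ) • k) : ℂ) * eC (∑ i, (k i : ℝ) * ω i)) *
            ((1 / (p : ℂ) ^ n) *
              ∑ᶠ k : Fin n → ℤ, (w ν k : ℂ) * eC (∑ i, (k i : ℝ) * ω i)) :=
  fast_algorithm_step_ii_general n hn p hp Γ hΓ0 hΓ Fp hFp ρ hρ η hη G hGfin g hgfin hmask y hyfin w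
    hwfin y' hy'
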